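/- Let $a,b>0$, let $\hat T\in(0,\infty]$ and set $\hat\tau=\min\{1,\hat T/2\}$. Suppose $y\colon[0,\hat T)\to[0,\infty)$ is continuous on $[0,\hat T)$ and differentiable on $(0,\hat T)$, $f\colon(0,\hat T)\to[0,\infty)$ is locally integrable, $y'(t)+a\,y(t)\le f(t)$ for all $t\in(0,\hat T)$, and $\int_t^{t+\hat\tau} f(s)\,ds\le b$ for all $t\in(0,\hat T-\hat\tau)$. Then $y(t)\le y(0)+2b+b/a$ for all $t\in(0,\hat T)$. -/

import Mathlib

/-!
Multiplying by the integrating factor `e^{at}` gives `y t ≤ e^{-a(t-s)} y s + ∫_s^t f`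
for `s ≤ t`. Up to time `2τ̂` this bounds `y` by `y 0 + 2b`, through at most two windows of
length `τ̂` (the first one reached as a limit from the right at `0`). Beyond time `2` one has
`τ̂ = 1`, and the bound `B = y 0 + 2b + b/a` propagates from `t - 1` to `t` because
`e^{-a} B + b ≤ B`, which follows from `e^{-a} ≤ 1/(1+a)` and `B ≥ b + b/a`.
-/

open MeasureTheory intervalIntegral Set Real
open scoped ENNReal

theorem le_exp_mul_add_integral_of_deriv_add_mul_le {a s t : ℝ} {y y' f : ℝ → ℝ}
    (ha : 0 ≤ a) (hst : s ≤ t) (hy : ContinuousOn y (Icc s t))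
    (hy' : ∀ x ∈ Ioo s t, HasDerivAt y (y' x) x)
    (hf : IntervalIntegrable f volume s t) (hf0 : ∀ x ∈ Ioo s t, 0 ≤ f x)
    (hode : ∀ x ∈ Ioo s t, y' x + a * y x ≤ f x) :
    y t ≤ exp (-(a * (t - s))) * y s + ∫ x in s..t, f x := by
  have hderiv : ∀ x ∈ Ioo s t, HasDerivWithinAt (fun x ↦ exp (a * x) * y x)
      (exp (a * x) * (y' x + a * y x)) (Ioi x) x := fun x hx ↦
    ((((hasDerivAt_id x).const_mul a).exp.mul (hy' x hx)).congr_deriv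
      (by simp; ring)).hasDerivWithinAt
  have hle : ∀ x ∈ Ioo s t, exp (a * x) * (y' x + a * y x) ≤ exp (a * t) * f x := fun x hx ↦
    calc _ ≤ exp (a * x) * f x := mul_le_mul_of_nonneg_left (hode x hx) (exp_pos _).le
      _ ≤ exp (a * t) * f x :=
        mul_le_mul_of_nonneg_right (exp_le_exp.2 (by nlinarith [hx.2])) (hf0 x hx)
  have key := sub_le_integral_of_hasDeriv_right_of_le (g := fun x ↦ exp (a * x) * y x) hst
    ((continuous_exp.comp (continuous_const_mul a)).continuousOn.mul hy) hderiv
    ((intervalIntegrable_iff_integrableOn_Icc_of_le hst).1 (hf.const_mul _)) hle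
  rw [intervalIntegral.integral_const_mul] at key
  have hexp : exp (a * t) * exp (-(a * (t - s))) = exp (a * s) := by rw [← exp_add]; ring_nf
  refine le_of_mul_le_mul_left ?_ (exp_pos (a * t))
  rw [mul_add, ← mul_assoc, hexp]
  linarith

theorem exp_neg_mul_add_le {a b B : ℝ} (ha : 0 < a) (hb : 0 ≤ b) (hB : b + b / a ≤ B) :
    exp (-a) * B + b ≤ B := by
  have hB0 : 0 ≤ B := le_trans (by positivity) hB
  have hexp : exp (-a) ≤ (1 + a)⁻¹ := by
    rw [exp_neg]; exact inv_anti₀ (by linarith) (by linarith [add_one_le_exp a])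
  have hbB : b * (1 + a) ≤ a * B := by
    have := mul_le_mul_of_nonneg_left hB ha.le
    rw [mul_add, mul_div_cancel₀ _ ha.ne'] at this
    linarith
  calc exp (-a) * B + b ≤ (1 + a)⁻¹ * B + b := by gcongr
    _ ≤ B := by
      rw [inv_mul_eq_div, div_add' _ _ _ (by linarith), div_le_iff₀ (by linarith)]
      nlinarith

theorem forall_pos_of_le_of_sub_one {P : ℝ → Prop} {c : ℝ} (hc : 1 ≤ c)
    (base : ∀ t, 0 < t → t ≤ c → P t) (step : ∀ t, c < t → P (t - 1) → P t) :
    ∀ t, 0 < t → P t := by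
  suffices h : ∀ n : ℕ, ∀ t, 0 < t → t ≤ c + n → P t from
    fun t ht ↦ h ⌈t⌉₊ t ht (by linarith [Nat.le_ceil t])
  intro n
  induction n with
  | zero => simpa using base
  | succ n ih =>
    intro t ht htn
    rcases le_or_gt t c with htc | htc
    · exact base t ht htc
    · exact step t htc (ih (t - 1) (by linarith) (by push_cast at htn; linarith))

theorem two_mul_toReal_min_one_half (T : ℝ≥0∞) :
    2 * (min 1 (T / 2)).toReal = (min 2 T).toReal := by
  rw [← ENNReal.toReal_ofNat 2, ← ENNReal.toReal_mul, mul_min, mul_one,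
    ENNReal.mul_div_cancel two_ne_zero ENNReal.ofNat_ne_top]

theorem min_two_ne_top (T : ℝ≥0∞) : min 2 T ≠ ⊤ :=
  ne_top_of_le_ne_top ENNReal.ofNat_ne_top (min_le_left _ _)

theorem ofReal_toReal_min_two_le (T : ℝ≥0∞) : ENNReal.ofReal (min 2 T).toReal ≤ T := by
  rw [ENNReal.ofReal_toReal (min_two_ne_top T)]
  exact min_le_right _ _

theorem toReal_min_two_pos {T : ℝ≥0∞} (hT : 0 < T) : 0 < (min 2 T).toReal :=
  ENNReal.toReal_pos (lt_min two_pos hT).ne' (min_two_ne_top T)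

theorem toReal_min_two_le_two (T : ℝ≥0∞) : (min 2 T).toReal ≤ 2 :=
  ENNReal.toReal_le_of_le_ofReal zero_le_two (by simp)

theorem min_le_toReal_min_two {T : ℝ≥0∞} {t : ℝ} (ht : ENNReal.ofReal t < T) :
    min t 2 ≤ (min 2 T).toReal := by
  rw [← ENNReal.ofReal_le_iff_le_toReal (min_two_ne_top T), ENNReal.ofReal_min, min_comm 2 T]
  exact min_le_min ht.le (by simp)

theorem le_exp_mul_add_integral_of_ofReal_lt {a : ℝ} {T : ℝ≥0∞} {y y' f : ℝ → ℝ}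
    (hy_cont : ContinuousOn y {t : ℝ | 0 ≤ t ∧ ENNReal.ofReal t < T})
    (hy_deriv : ∀ t : ℝ, 0 < t → ENNReal.ofReal t < T → HasDerivAt y (y' t) t)
    (hf_nonneg : ∀ t : ℝ, 0 < t → ENNReal.ofReal t < T → 0 ≤ f t)
    (hf_int : ∀ t₁ t₂ : ℝ, 0 ≤ t₁ → t₁ ≤ t₂ → ENNReal.ofReal t₂ < T →
      IntervalIntegrable f volume t₁ t₂)
    (hode : ∀ t : ℝ, 0 < t → ENNReal.ofReal t < T → y' t + a * y t ≤ f t)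
    (ha : 0 ≤ a) {s t : ℝ} (hs : 0 ≤ s) (hst : s ≤ t) (ht : ENNReal.ofReal t < T) :
    y t ≤ exp (-(a * (t - s))) * y s + ∫ x in s..t, f x := by
  have hlt : ∀ x ≤ t, ENNReal.ofReal x < T := fun x hx ↦
    (ENNReal.ofReal_le_ofReal hx).trans_lt ht
  have hIoo : ∀ x ∈ Ioo s t, 0 < x ∧ ENNReal.ofReal x < T := fun x hx ↦
    ⟨hs.trans_lt hx.1, hlt x hx.2.le⟩
  exact le_exp_mul_add_integral_of_deriv_add_mul_le ha hst
    (hy_cont.mono fun x hx ↦ ⟨hs.trans hx.1, hlt x hx.2⟩)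
    (fun x hx ↦ hy_deriv x (hIoo x hx).1 (hIoo x hx).2) (hf_int s t hs hst ht)
    (fun x hx ↦ hf_nonneg x (hIoo x hx).1 (hIoo x hx).2)
    (fun x hx ↦ hode x (hIoo x hx).1 (hIoo x hx).2)

theorem le_add_two_mul_of_le_two_mul {a b τ : ℝ} {T : ℝ≥0∞} {y y' f : ℝ → ℝ}
    (hy_cont : ContinuousOn y {t : ℝ | 0 ≤ t ∧ ENNReal.ofReal t < T})
    (hy_nonneg : ∀ t : ℝ, 0 ≤ t → ENNReal.ofReal t < T → 0 ≤ y t)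
    (hy_deriv : ∀ t : ℝ, 0 < t → ENNReal.ofReal t < T → HasDerivAt y (y' t) t)
    (hf_nonneg : ∀ t : ℝ, 0 < t → ENNReal.ofReal t < T → 0 ≤ f t)
    (hf_int : ∀ t₁ t₂ : ℝ, 0 ≤ t₁ → t₁ ≤ t₂ → ENNReal.ofReal t₂ < T →
      IntervalIntegrable f volume t₁ t₂)
    (hode : ∀ t : ℝ, 0 < t → ENNReal.ofReal t < T → y' t + a * y t ≤ f t)
    (hbound : ∀ t : ℝ, 0 < t → ENNReal.ofReal (t + τ) < T →
      ∫ s in t..(t + τ), f s ≤ b)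
    (ha : 0 ≤ a) (hb : 0 ≤ b) (hτ : 0 < τ) (hτT : ENNReal.ofReal (2 * τ) ≤ T)
    {t : ℝ} (ht : 0 < t) (htτ : t ≤ 2 * τ) (htT : ENNReal.ofReal t < T) :
    y t ≤ y 0 + 2 * b := by
  have hlt : ∀ u < 2 * τ, ENNReal.ofReal u < T := fun u hu ↦
    ((ENNReal.ofReal_lt_ofReal_iff (by positivity)).2 hu).trans_le hτT
  have hstep : ∀ s u, 0 ≤ s → s ≤ u → ENNReal.ofReal u < T →
      y u ≤ y s + ∫ x in s..u, f x := by
    intro s u hs hsu huT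
    have hexp : exp (-(a * (u - s))) ≤ 1 := exp_le_one_iff.2 (by nlinarith)
    have hys := hy_nonneg s hs ((ENNReal.ofReal_le_ofReal hsu).trans_lt huT)
    have := le_exp_mul_add_integral_of_ofReal_lt hy_cont hy_deriv hf_nonneg hf_int hode ha
      hs hsu huT
    nlinarith
  -- `hbound` has no window starting at `0`; use windows starting at `ε` and let `ε → 0⁺`.
  have hbase : ∀ u, 0 < u → u ≤ τ → y u ≤ y 0 + b := by
    intro u hu huτ
    have hεu : ∀ ε ∈ Ioo 0 u, y u ≤ y ε + b := by
      intro ε hε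
      have hετ : ENNReal.ofReal (ε + τ) < T := hlt _ (by linarith [hε.2])
      have hmono : ∫ x in ε..u, f x ≤ ∫ x in ε..(ε + τ), f x :=
        integral_mono_interval le_rfl hε.2.le (by linarith [hε.1])
          ((ae_restrict_iff' measurableSet_Ioc).2 (.of_forall fun x hx ↦
            hf_nonneg x (hε.1.trans hx.1) (hlt x (by linarith [hx.2, hε.2]))))
          (hf_int ε (ε + τ) hε.1.le (by linarith) hετ)
      linarith [hstep ε u hε.1.le hε.2.le (hlt u (by linarith)), hbound ε hε.1 hετ]
    have hcont : ContinuousWithinAt y (Ioo 0 u) 0 :=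
      (hy_cont 0 ⟨le_rfl, hlt 0 (by linarith)⟩).mono fun x hx ↦
        ⟨hx.1.le, hlt x (by linarith [hx.2])⟩
    have := left_nhdsWithin_Ioo_neBot hu
    exact ge_of_tendsto (hcont.tendsto.add_const b) (eventually_nhdsWithin_of_forall hεu)
  rcases le_or_gt t τ with htτ' | htτ'
  · linarith [hbase t ht htτ']
  · have hwindow := hbound (t - τ) (by linarith) (by rwa [sub_add_cancel])
    rw [sub_add_cancel] at hwindow
    linarith [hstep (t - τ) t (by linarith) (by linarith) htT,
      hbase (t - τ) (by linarith) (by linarith)]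

/-- ODE comparison lemma (Lemma 2.2): `T̂ ∈ (0,∞]` may be infinite, `τ̂ = min{1, T̂/2}`. -/
theorem stmt_0 (a b : ℝ) (ha : 0 < a) (hb : 0 < b)
    (T : ℝ≥0∞) (hT : 0 < T)
    (τ : ℝ) (hτ : τ = (min 1 (T / 2)).toReal)
    (y y' f : ℝ → ℝ)
    (hy_cont : ContinuousOn y {t : ℝ | 0 ≤ t ∧ ENNReal.ofReal t < T})
    (hy_nonneg : ∀ t : ℝ, 0 ≤ t → ENNReal.ofReal t < T → 0 ≤ y t)
    (hy_deriv : ∀ t : ℝ, 0 < t → ENNReal.ofReal t < T → HasDerivAt y (y' t) t)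
    (hf_nonneg : ∀ t : ℝ, 0 < t → ENNReal.ofReal t < T → 0 ≤ f t)
    (hf_int : ∀ t₁ t₂ : ℝ, 0 ≤ t₁ → t₁ ≤ t₂ → ENNReal.ofReal t₂ < T →
      IntervalIntegrable f volume t₁ t₂)
    (hode : ∀ t : ℝ, 0 < t → ENNReal.ofReal t < T → y' t + a * y t ≤ f t)
    (hbound : ∀ t : ℝ, 0 < t → ENNReal.ofReal (t + τ) < T →
      ∫ s in t..(t + τ), f s ≤ b) :
    ∀ t : ℝ, 0 < t → ENNReal.ofReal t < T → y t ≤ y 0 + 2 * b + b / a := by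
  have h2τ : 2 * τ = (min 2 T).toReal := hτ ▸ two_mul_toReal_min_one_half T
  have hτ0 : 0 < τ := by linarith [toReal_min_two_pos hT]
  have hcover : ∀ t, ENNReal.ofReal t < T → min t 2 ≤ 2 * τ :=
    fun t htT ↦ h2τ ▸ min_le_toReal_min_two htT
  have hy0 : 0 ≤ y 0 := hy_nonneg 0 le_rfl (by simpa using hT)
  refine forall_pos_of_le_of_sub_one (P := fun t ↦ ENNReal.ofReal t < T → y t ≤ _)
    one_le_two ?_ ?_
  · intro t ht ht2 htT
    have := le_add_two_mul_of_le_two_mul hy_cont hy_nonneg hy_deriv hf_nonneg hf_int hode hbound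
      ha.le hb.le hτ0 (h2τ ▸ ofReal_toReal_min_two_le T) ht
      (by simpa [ht2] using hcover t htT) htT
    linarith [div_pos hb ha]
  · intro t ht ih htT
    have hτ1 : τ = 1 := by
      linarith [min_eq_right ht.le ▸ hcover t htT, toReal_min_two_le_two T]
    have hprev := ih ((ENNReal.ofReal_le_ofReal (by linarith)).trans_lt htT)
    have hwindow := hbound (t - 1) (by linarith) (by rwa [hτ1, sub_add_cancel])
    rw [hτ1, sub_add_cancel] at hwindow
    calc y t ≤ exp (-(a * (t - (t - 1)))) * y (t - 1) + ∫ x in (t - 1)..t, f x :=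
          le_exp_mul_add_integral_of_ofReal_lt hy_cont hy_deriv hf_nonneg hf_int hode ha.le
            (by linarith) (by linarith) htT
      _ ≤ exp (-a) * (y 0 + 2 * b + b / a) + b := by rw [sub_sub_cancel, mul_one]; gcongr
      _ ≤ y 0 + 2 * b + b / a := exp_neg_mul_add_le ha hb.le (by linarith)
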